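/- arXiv:2105.03930 — 2 statements merged into one kernel-verified Lean document; each statement's English description precedes it below -/
import Mathlib

section
/- Let N be a positive natural number, and work in ℝ^N with the standard inner product ⟨·,·⟩ and componentwise product ⊙. Let S : ℝ^N → ℝ^N be a linear map with ⟨S v, v⟩ = 0 for all v. Let a, u, q ∈ ℝ^N and set k = S( u + (1/6) q + (1/3) a ⊙ u ) and l = 2 a ⊙ k. Then ⟨u, k⟩ + (1/6) ⟨u, l⟩ + (1/6) ⟨k, q⟩ = 0. -/
open scoped RealInnerProductSpace

/-- Componentwise (pointwise) product on `EuclideanSpace ℝ (Fin N)`. -/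
def cwMul {N : ℕ} (v w : EuclideanSpace ℝ (Fin N)) : EuclideanSpace ℝ (Fin N) :=
  WithLp.toLp 2 (fun i => v i * w i)

lemma inner_cwMul_right {N : ℕ} (a u k : EuclideanSpace ℝ (Fin N)) :
    ⟪u, cwMul a k⟫ = ⟪cwMul a u, k⟫ := by
  simp only [PiLp.inner_apply, cwMul, RCLike.inner_apply, conj_trivial]
  exact Finset.sum_congr rfl fun i _ => by ring

theorem eq_scheme_stage_identity_general
    (N : ℕ)
    (S : EuclideanSpace ℝ (Fin N) →ₗ[ℝ] EuclideanSpace ℝ (Fin N))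
    (hS : ∀ v : EuclideanSpace ℝ (Fin N), ⟪S v, v⟫ = 0)
    (a u q k l : EuclideanSpace ℝ (Fin N))
    (hk : k = S (u + (1/6 : ℝ) • q + (1/3 : ℝ) • cwMul a u))
    (hl : l = (2 : ℝ) • cwMul a k) :
    ⟪u, k⟫ + (1/6 : ℝ) * ⟪u, l⟫ + (1/6 : ℝ) * ⟪k, q⟫ = 0 := by
  -- The left-hand side is `⟪w, S w⟫` for the argument `w` of `S`, once `a ⊙` is moved from `k` onto `u`.
  have hskew : ⟪u + (1/6 : ℝ) • q + (1/3 : ℝ) • cwMul a u, k⟫ = 0 := by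
    rw [real_inner_comm, hk]
    exact hS _
  rw [inner_add_left, inner_add_left, real_inner_smul_left, real_inner_smul_left] at hskew
  rw [hl, real_inner_smul_right, inner_cwMul_right, real_inner_comm q k]
  linarith

/-- the key stage identity in the proof of Theorem 2.3:
with k = S(u + q/6 + (1/3) a ⊙ u) and l = 2 a ⊙ k, one has
⟨u,k⟩ + (1/6)⟨u,l⟩ + (1/6)⟨k,q⟩ = 0. -/
theorem eq_scheme_stage_identity
    (N : ℕ) (hN : 0 < N)
    (S : EuclideanSpace ℝ (Fin N) →ₗ[ℝ] EuclideanSpace ℝ (Fin N))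
    (hS : ∀ v : EuclideanSpace ℝ (Fin N), ⟪S v, v⟫ = 0)
    (a u q k l : EuclideanSpace ℝ (Fin N))
    (hk : k = S (u + (1/6 : ℝ) • q + (1/3 : ℝ) • cwMul a u))
    (hl : l = (2 : ℝ) • cwMul a k) :
    ⟪u, k⟫ + (1/6 : ℝ) * ⟪u, l⟫ + (1/6 : ℝ) * ⟪k, q⟫ = 0 :=
  eq_scheme_stage_identity_general N S hS a u q k l hk hl
end

section
/- (Theorem 2.3.) Let N and s be positive natural numbers, and work in ℝ^N with the standard inner product ⟨·,·⟩ and componentwise product ⊙. Let S : ℝ^N → ℝ^N be a linear map with ⟨S v, v⟩ = 0 for all v. Let τ ∈ ℝ, and let a : Fin s → Fin s → ℝ and b : Fin s → ℝ satisfy bᵢ aᵢⱼ + bⱼ aⱼᵢ = bᵢ bⱼ for all i, j. For each i = 1,…,s let aᵢ* ∈ ℝ^N be given (the predicted values). Suppose uⁿ, qⁿ, uⁿ⁺¹, qⁿ⁺¹ ∈ ℝ^N and stage values uᵢ, qᵢ, kᵢ, lᵢ ∈ ℝ^N satisfy kᵢ = S( uᵢ + (1/6) qᵢ + (1/3) aᵢ*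 ⊙ uᵢ ), lᵢ = 2 aᵢ* ⊙ kᵢ, uᵢ = uⁿ + τ Σⱼ aᵢⱼ kⱼ, qᵢ = qⁿ + τ Σⱼ aᵢⱼ lⱼ, uⁿ⁺¹ = uⁿ + τ Σᵢ bᵢ kᵢ, and qⁿ⁺¹ = qⁿ + τ Σᵢ bᵢ lᵢ. Then ½ ⟨uⁿ⁺¹, uⁿ⁺¹⟩ + (1/6) ⟨uⁿ⁺¹, qⁿ⁺¹⟩ = ½ ⟨uⁿ, uⁿ⟩ + (1/6) ⟨uⁿ, qⁿ⟩. -/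
open scoped RealInnerProductSpace BigOperators

/-!
Writing `y = (u, q)` and `K = (k, l)`, the energy is the diagonal `B y y` of the bilinear form
`B (u, q) (u', q') = ½⟨u, u'⟩ + (1/6)⟨u, q'⟩`. Any Runge–Kutta step whose coefficients satisfy
`bᵢ aᵢⱼ + bⱼ aⱼᵢ = bᵢ bⱼ` preserves `B y y` as soon as every stage satisfies
`B Yᵢ Kᵢ + B Kᵢ Yᵢ = 0`; for the RLW scheme this stage quantity equals `⟨S vᵢ, vᵢ⟩` with
`vᵢ = uᵢ + qᵢ/6 + (1/3) aᵢ* ⊙ uᵢ`, because multiplication by `aᵢ*` is self-adjoint.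
-/

section RungeKutta

variable {R M ι : Type*} [CommRing R] [AddCommGroup M] [Module R M] [Fintype ι]

/-- The algebraic condition on a Runge–Kutta tableau under which it conserves every quadratic
invariant. -/
def IsSymplecticRK (a : ι → ι → R) (b : ι → R) : Prop :=
  ∀ i j, b i * a i j + b j * a j i = b i * b j

theorem IsSymplecticRK.sum_mul_sum_mul_add {a : ι → ι → R} {b : ι → R}
    (hab : IsSymplecticRK a b) (G : ι → ι → R) :
    ∑ i, b i * ∑ j, a i j * (G j i + G i j) = ∑ i, b i * ∑ j, b j * G j i := by
  calc ∑ i, b i * ∑ j, a i j * (G j i + G i j)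
      = ∑ i, ∑ j, b i * a i j * G j i + ∑ i, ∑ j, b i * a i j * G i j := by
        simp only [Finset.mul_sum, mul_add, ← mul_assoc, Finset.sum_add_distrib]
    _ = ∑ i, ∑ j, b i * a i j * G j i + ∑ i, ∑ j, b j * a j i * G j i := by
        rw [Finset.sum_comm (f := fun i j => b i * a i j * G i j)]
    _ = ∑ i, b i * ∑ j, b j * G j i := by
        rw [← Finset.sum_add_distrib]
        refine Finset.sum_congr rfl fun i _ => ?_
        rw [← Finset.sum_add_distrib, Finset.mul_sum]
        refine Finset.sum_congr rfl fun j _ => ?_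
        linear_combination G j i * hab i j

theorem IsSymplecticRK.apply_self_eq {a : ι → ι → R} {b : ι → R} (hab : IsSymplecticRK a b)
    (B : LinearMap.BilinForm R M) (τ : R) (y₀ y₁ : M) (Y K : ι → M)
    (hY : ∀ i, Y i = y₀ + τ • ∑ j, a i j • K j) (hy₁ : y₁ = y₀ + τ • ∑ i, b i • K i)
    (hstage : ∀ i, B (Y i) (K i) + B (K i) (Y i) = 0) :
    B y₁ y₁ = B y₀ y₀ := by
  have hexpand : B y₁ y₁ = B y₀ y₀ + τ * ∑ i, b i * (B y₀ (K i) + B (K i) y₀)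
      + τ ^ 2 * ∑ i, b i * ∑ j, b j * B (K j) (K i) := by
    simp only [hy₁, map_add, map_smul, map_sum, LinearMap.sum_apply, LinearMap.add_apply,
      LinearMap.smul_apply, smul_eq_mul, mul_add, Finset.mul_sum, Finset.sum_add_distrib]
    ring_nf
  have hstage₀ : ∀ i, B y₀ (K i) + B (K i) y₀
      = -τ * ∑ j, a i j * (B (K j) (K i) + B (K i) (K j)) := by
    intro i
    have := hstage i
    simp only [hY i, map_add, map_smul, map_sum, LinearMap.sum_apply, LinearMap.add_apply,
      LinearMap.smul_apply, smul_eq_mul] at this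
    simp only [mul_add, Finset.sum_add_distrib]
    linear_combination this
  simp only [hexpand, hstage₀, mul_left_comm (b _) (-τ), ← Finset.mul_sum,
    hab.sum_mul_sum_mul_add fun i j => B (K i) (K j)]
  ring

end RungeKutta

section Energy

variable (E : Type*) [NormedAddCommGroup E] [InnerProductSpace ℝ E]

noncomputable def rlwEnergyForm : LinearMap.BilinForm ℝ (E × E) :=
  (1 / 2 : ℝ) • (innerₗ E).compl₁₂ (LinearMap.fst ℝ E E) (LinearMap.fst ℝ E E)
    + (1 / 6 : ℝ) • (innerₗ E).compl₁₂ (LinearMap.fst ℝ E E) (LinearMap.snd ℝ E E)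

variable {E}

theorem rlwEnergyForm_apply (u q u' q' : E) :
    rlwEnergyForm E (u, q) (u', q') = 1 / 2 * ⟪u, u'⟫ + 1 / 6 * ⟪u, q'⟫ :=
  rfl

end Energy

theorem inner_cwMul_left {N : ℕ} (c x y : EuclideanSpace ℝ (Fin N)) :
    ⟪cwMul c x, y⟫ = ⟪x, cwMul c y⟫ := by
  simp only [PiLp.inner_apply, RCLike.inner_apply, conj_trivial, cwMul]
  exact Finset.sum_congr rfl fun i _ => by ring

theorem rlwEnergyForm_stage_eq_zero {N : ℕ}
    {S : EuclideanSpace ℝ (Fin N) →ₗ[ℝ] EuclideanSpace ℝ (Fin N)}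
    (hS : ∀ v, ⟪S v, v⟫ = 0) {c u q k l : EuclideanSpace ℝ (Fin N)}
    (hk : k = S (u + (1 / 6 : ℝ) • q + (1 / 3 : ℝ) • cwMul c u))
    (hl : l = (2 : ℝ) • cwMul c k) :
    rlwEnergyForm _ (u, q) (k, l) + rlwEnergyForm _ (k, l) (u, q) = 0 := by
  have hSk := hS (u + (1 / 6 : ℝ) • q + (1 / 3 : ℝ) • cwMul c u)
  rw [← hk] at hSk
  simp only [inner_add_right, real_inner_smul_right] at hSk
  rw [rlwEnergyForm_apply, rlwEnergyForm_apply, hl, real_inner_smul_right, ← inner_cwMul_left,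
    real_inner_comm k u, real_inner_comm k (cwMul c u)]
  linear_combination hSk

theorem scheme23_energy_conservation_general
    (N s : ℕ)
    (S : EuclideanSpace ℝ (Fin N) →ₗ[ℝ] EuclideanSpace ℝ (Fin N))
    (hS : ∀ v : EuclideanSpace ℝ (Fin N), ⟪S v, v⟫ = 0)
    (τ : ℝ) (a : Fin s → Fin s → ℝ) (b : Fin s → ℝ)
    (hsym : ∀ i j, b i * a i j + b j * a j i = b i * b j)
    (astar : Fin s → EuclideanSpace ℝ (Fin N))
    (un qn un1 qn1 : EuclideanSpace ℝ (Fin N))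
    (uS qS kS lS : Fin s → EuclideanSpace ℝ (Fin N))
    (hk : ∀ i, kS i = S (uS i + (1/6 : ℝ) • qS i + (1/3 : ℝ) • cwMul (astar i) (uS i)))
    (hl : ∀ i, lS i = (2 : ℝ) • cwMul (astar i) (kS i))
    (hu : ∀ i, uS i = un + τ • ∑ j, a i j • kS j)
    (hq : ∀ i, qS i = qn + τ • ∑ j, a i j • lS j)
    (hun1 : un1 = un + τ • ∑ i, b i • kS i)
    (hqn1 : qn1 = qn + τ • ∑ i, b i • lS i) :
    (1/2 : ℝ) * ⟪un1, un1⟫ + (1/6 : ℝ) * ⟪un1, qn1⟫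
      = (1/2 : ℝ) * ⟪un, un⟫ + (1/6 : ℝ) * ⟪un, qn⟫ := by
  have hstep := IsSymplecticRK.apply_self_eq hsym (rlwEnergyForm _) τ (un, qn) (un1, qn1)
    (fun i => (uS i, qS i)) (fun i => (kS i, lS i))
    (fun i => by ext <;> simp [hu, hq, Prod.fst_sum, Prod.snd_sum])
    (by ext <;> simp [hun1, hqn1, Prod.fst_sum, Prod.snd_sum])
    (fun i => rlwEnergyForm_stage_eq_zero hS (hk i) (hl i))
  simpa only [rlwEnergyForm_apply] using hstep

/-- Theorem 2.3: the linear energy-preserving Runge–Kutta scheme for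
the linearized EQ system conserves the discrete quadratic energy
Eⁿ = ½⟨uⁿ,uⁿ⟩ + (1/6)⟨uⁿ,qⁿ⟩. -/
theorem scheme23_energy_conservation
    (N s : ℕ) (hN : 0 < N) (hs : 0 < s)
    (S : EuclideanSpace ℝ (Fin N) →ₗ[ℝ] EuclideanSpace ℝ (Fin N))
    (hS : ∀ v : EuclideanSpace ℝ (Fin N), ⟪S v, v⟫ = 0)
    (τ : ℝ) (a : Fin s → Fin s → ℝ) (b : Fin s → ℝ)
    (hsym : ∀ i j, b i * a i j + b j * a j i = b i * b j)
    (astar : Fin s → EuclideanSpace ℝ (Fin N))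
    (un qn un1 qn1 : EuclideanSpace ℝ (Fin N))
    (uS qS kS lS : Fin s → EuclideanSpace ℝ (Fin N))
    (hk : ∀ i, kS i = S (uS i + (1/6 : ℝ) • qS i + (1/3 : ℝ) • cwMul (astar i) (uS i)))
    (hl : ∀ i, lS i = (2 : ℝ) • cwMul (astar i) (kS i))
    (hu : ∀ i, uS i = un + τ • ∑ j, a i j • kS j)
    (hq : ∀ i, qS i = qn + τ • ∑ j, a i j • lS j)
    (hun1 : un1 = un + τ • ∑ i, b i • kS i)
    (hqn1 : qn1 = qn + τ • ∑ i, b i • lS i) :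
    (1/2 : ℝ) * ⟪un1, un1⟫ + (1/6 : ℝ) * ⟪un1, qn1⟫
      = (1/2 : ℝ) * ⟪un, un⟫ + (1/6 : ℝ) * ⟪un, qn⟫ :=
  scheme23_energy_conservation_general N s S hS τ a b hsym astar un qn un1 qn1 uS qS kS lS hk hl hu
    hq hun1 hqn1
end
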